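/- For every positive integer n, the cyclic circulant tournament C⃗_{2n+1}(1,2,…,n) has dichromatic number 2, and every acyclic 2-coloring of it partitions Z_{2n+1} into the two sets {a, a+1, …, a+n} and {a+n+1, a+n+2, …, a−1} for some a ∈ Z_{2n+1}. -/

import Mathlib

/-- A set `S` of vertices induces an acyclic subdigraph of the digraph with
arc relation `A`: there is no directed cycle within `S`. -/
def AcyclicOn {V : Type*} (A : V → V → Prop) (S : Set V) : Prop :=
  ∀ v, ¬ Relation.TransGen (fun x y => x ∈ S ∧ y ∈ S ∧ A x y) v v

/-- An acyclic `k`-coloring: every color class induces an acyclic subdigraph. -/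
def IsAcyclicColoring {V : Type*} (A : V → V → Prop) (k : ℕ) (α : V → Fin k) : Prop :=
  ∀ c : Fin k, AcyclicOn A {v | α v = c}

/-- The `k`-dicoloring graph: vertices are acyclic `k`-colorings, two colorings
adjacent when they differ on exactly one vertex. -/
def DicolGraph {V : Type*} (A : V → V → Prop) (k : ℕ) :
    SimpleGraph {α : V → Fin k // IsAcyclicColoring A k α} where
  Adj α β := ∃! v, α.1 v ≠ β.1 v
  symm := by
    constructor
    rintro α β ⟨v, hv, hu⟩
    exact ⟨v, Ne.symm hv, fun w hw => hu w (Ne.symm hw)⟩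
  loopless := by
    constructor
    rintro α ⟨v, hv, -⟩
    exact hv rfl

/-- The cyclic circulant tournament on `ZMod (2n+1)` with jumps `1,…,n`. -/
def CycArc (n : ℕ) (a b : ZMod (2*n+1)) : Prop := (b - a).val ∈ Finset.Icc 1 n

/-- The tournament obtained from `CycArc n` by reversing the jump `n`. -/
def RevArc (n : ℕ) (a b : ZMod (2*n+1)) : Prop :=
  (b - a).val ∈ Finset.Icc 1 (n-1) ∨ (b - a).val = n + 1

/-- A forbidden triangle in `C_{2n+1}⟨n⟩`. -/
def ForbiddenTriangle (n : ℕ) (S : Set (ZMod (2*n+1))) : Prop :=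
  ∃ i : ZMod (2*n+1), S = {i, i + n, i + n + 1}


/-!
An acyclic set `S` of the tournament has a source-like element `m` that is minimal for the
reachability order inside `S`; every `w ∈ S` beyond the window `{m, m+1, …, m+n}` would send
an arc to `m`, so `S` lies in that window of size `n + 1`. Hence the whole vertex set is not
acyclic, while a window and its complement (which sits inside the opposite window) form an acyclic
2-colouring. The two colour classes of any acyclic 2-colouring cover all `2n + 1` vertices, so one
of them has at least `n + 1` elements and therefore fills its window.
-/

lemma AcyclicOn.mono {V : Type*} {A : V → V → Prop} {S T : Set V} (hST : S ⊆ T)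
    (hT : AcyclicOn A T) : AcyclicOn A S := fun v hv =>
  hT v (Relation.TransGen.mono (fun _ _ h => ⟨hST h.1, hST h.2.1, h.2.2⟩) _ _ hv)

namespace CycArc

/-- The paper's interval `{a, a+1, …, a+n}` of `ℤ_{2n+1}`. -/
def window (n : ℕ) (a : ZMod (2*n+1)) : Set (ZMod (2*n+1)) := {v | (v - a).val ≤ n}

variable {n : ℕ}

lemma val_sub_lt_of_mem_window {a x y : ZMod (2*n+1)} (hx : x ∈ window n a)
    (hA : CycArc n x y) : (x - a).val < (y - a).val := by
  obtain ⟨h1, h2⟩ := Finset.mem_Icc.mp hA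
  have hx' : (x - a).val ≤ n := hx
  have : (y - a).val = (x - a).val + (y - x).val := by
    rw [← ZMod.val_add_of_lt (by omega), sub_add_sub_cancel']
  omega

lemma acyclicOn_window (n : ℕ) (a : ZMod (2*n+1)) : AcyclicOn (CycArc n) (window n a) := by
  intro v hv
  have := Relation.TransGen.lift (p := (· < ·)) (fun x => (x - a).val)
    (fun _ _ h => val_sub_lt_of_mem_window h.1 h.2.2) _ _ hv
  rw [Function.onFun, Relation.transGen_eq_self] at this
  exact lt_irrefl _ this

lemma arc_of_not_mem_window {m w : ZMod (2*n+1)} (hw : w ∉ window n m) : CycArc n w m := by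
  have hw' : n < (w - m).val := not_le.mp hw
  have : NeZero (w - m) := ⟨fun h => by simp [h] at hw'⟩
  have hlt := ZMod.val_lt (w - m)
  rw [CycArc, ← neg_sub, ZMod.val_neg_of_ne_zero, Finset.mem_Icc]
  omega

lemma exists_subset_window_of_acyclicOn {S : Set (ZMod (2*n+1))}
    (hS : AcyclicOn (CycArc n) S) : ∃ a, S ⊆ window n a := by
  rcases S.eq_empty_or_nonempty with rfl | hne
  · exact ⟨0, Set.empty_subset _⟩
  let R := Relation.TransGen fun x y => x ∈ S ∧ y ∈ S ∧ CycArc n x y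
  have : Std.Irrefl R := ⟨hS⟩
  obtain ⟨m, hm, hmin⟩ := (Finite.wellFounded_of_trans_of_irrefl R).has_min S hne
  refine ⟨m, fun w hw => by_contra fun hout => hmin w hw ?_⟩
  exact .single ⟨hw, hm, arc_of_not_mem_window hout⟩

lemma ncard_window (a : ZMod (2*n+1)) : (window n a).ncard = n + 1 := by
  have himage : window n a = (fun j : ℕ => a + j) '' Set.Iic n := by
    ext v
    constructor
    · intro hv
      exact ⟨(v - a).val, hv, by simp⟩
    · rintro ⟨j, hj, rfl⟩
      simp only [window, Set.mem_ofPred_eq, add_sub_cancel_left]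
      rwa [ZMod.val_cast_of_lt (by simp at hj; omega)]
  rw [himage, Set.InjOn.ncard_image, Set.ncard_Iic_nat]
  intro i hi j hj hij
  have := congrArg ZMod.val (add_left_cancel hij)
  rwa [ZMod.val_cast_of_lt (by simp at hi; omega), ZMod.val_cast_of_lt (by simp at hj; omega)]
    at this

lemma compl_window_subset (a : ZMod (2*n+1)) :
    (window n a)ᶜ ⊆ window n (a + (n + 1 : ℕ)) := by
  intro v hv
  have hv' : n < (v - a).val := not_le.mp hv
  have hlt := ZMod.val_lt (v - a)
  have hcast : ((n + 1 : ℕ) : ZMod (2*n+1)).val = n + 1 := ZMod.val_cast_of_lt (by omega)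
  change (v - (a + (n + 1 : ℕ))).val ≤ n
  rw [← sub_sub, ZMod.val_sub (by rw [hcast]; omega), hcast]
  omega

lemma eq_window_of_acyclicOn {S : Set (ZMod (2*n+1))} (hS : AcyclicOn (CycArc n) S)
    (hcard : n + 1 ≤ S.ncard) : ∃ a, S = window n a := by
  obtain ⟨a, ha⟩ := exists_subset_window_of_acyclicOn hS
  exact ⟨a, Set.eq_of_subset_of_ncard_le ha (by rw [ncard_window]; exact hcard)⟩

lemma not_acyclicOn_univ (hn : 1 ≤ n) : ¬ AcyclicOn (CycArc n) Set.univ := by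
  intro h
  obtain ⟨a, ha⟩ := exists_subset_window_of_acyclicOn h
  have := Set.ncard_le_ncard ha
  rw [Set.ncard_univ, Nat.card_zmod, ncard_window] at this
  omega

lemma exists_isAcyclicColoring_two (n : ℕ) :
    ∃ α : ZMod (2*n+1) → Fin 2, IsAcyclicColoring (CycArc n) 2 α := by
  classical
  refine ⟨fun v => if v ∈ window n 0 then 0 else 1, fun c => ?_⟩
  fin_cases c
  · refine (acyclicOn_window n 0).mono fun v hv => ?_
    by_contra h
    simp [h] at hv
  · refine (acyclicOn_window n _).mono fun v hv => compl_window_subset 0 fun h => ?_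
    simp [h] at hv

lemma exists_colorClass_eq_window {α : ZMod (2*n+1) → Fin 2}
    (hα : IsAcyclicColoring (CycArc n) 2 α) : ∃ a c, {v | α v = c} = window n a := by
  have hcompl : {v | α v = 1} = {v | α v = 0}ᶜ := by
    ext v
    simp only [Set.mem_ofPred_eq, Set.mem_compl_iff]
    omega
  have hsum := Set.ncard_add_ncard_compl {v | α v = 0}
  rw [← hcompl, Nat.card_zmod] at hsum
  rcases (by omega : n + 1 ≤ {v | α v = 0}.ncard ∨ n + 1 ≤ {v | α v = 1}.ncard) with h | h
  · obtain ⟨a, ha⟩ := eq_window_of_acyclicOn (hα 0) h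
    exact ⟨a, 0, ha⟩
  · obtain ⟨a, ha⟩ := eq_window_of_acyclicOn (hα 1) h
    exact ⟨a, 1, ha⟩

end CycArc

theorem stmt5 (n : ℕ) (hn : 1 ≤ n) :
    (∃ α : ZMod (2*n+1) → Fin 2, IsAcyclicColoring (CycArc n) 2 α) ∧
    (¬ ∃ α : ZMod (2*n+1) → Fin 1, IsAcyclicColoring (CycArc n) 1 α) ∧
    (∀ α : ZMod (2*n+1) → Fin 2, IsAcyclicColoring (CycArc n) 2 α →
      ∃ (a : ZMod (2*n+1)) (c : Fin 2),
        {v | α v = c} = {v | (v - a).val ≤ n}) := by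
  refine ⟨CycArc.exists_isAcyclicColoring_two n, ?_,
    fun α hα => CycArc.exists_colorClass_eq_window hα⟩
  rintro ⟨α, hα⟩
  exact CycArc.not_acyclicOn_univ hn ((hα 0).mono fun v _ => Subsingleton.elim (α v) 0)
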